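/- Any \(4d\times 4d\) matrix of the covariant form \(\mathcal{A}=\begin{pmatrix}A_{11}&I-A_{11}&A_{13}&A_{13}\\A_{21}&-A_{21}&I-A_{11}^T&-A_{11}^T\\0&0&I&I\\-I&I&0&0\end{pmatrix}\), with \(A_{13}=A_{13}^T\) and \(A_{21}=A_{21}^T\), is symplectic, i.e. \(\mathcal{A}^T J_{2d}\mathcal{A}=J_{2d}\). -/

import Mathlib

/-!
Write the matrix as `[[P, Q], [R, S]]` with `2d × 2d` blocks. Then `𝒜ᵀ J 𝒜` has blocks
`PᵀR - RᵀP`, `PᵀS - RᵀQ`, `QᵀR - SᵀP`, `QᵀS - SᵀQ`, so `𝒜` is symplectic as soon as `PᵀR` and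
`QᵀS` are symmetric and `PᵀS - RᵀQ = I`. For the covariant form, `PᵀR = [[-A₂₁, A₂₁], [A₂₁, -A₂₁]]`
and `QᵀS = [[A₁₃, A₁₃], [A₁₃, A₁₃]]` are symmetric because `A₂₁` and `A₁₃` are, and the `A₁₁`-terms
cancel in `PᵀS - RᵀQ`.
-/

open Matrix

/-- The standard symplectic matrix `J_{2d} = [[0, I_{2d}],[-I_{2d}, 0]]` in `ℝ^{4d×4d}`. -/
def stdJ2 (d : ℕ) :
    Matrix ((Fin d ⊕ Fin d) ⊕ (Fin d ⊕ Fin d)) ((Fin d ⊕ Fin d) ⊕ (Fin d ⊕ Fin d)) ℝ :=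
  Matrix.fromBlocks 0 1 (-1) 0

namespace Matrix

variable {m n n' α : Type*} [Fintype m] [CommRing α]

theorem transpose_mul_eq_of_isSymm {A B : Matrix m n α} (h : (Aᵀ * B).IsSymm) :
    Bᵀ * A = Aᵀ * B := by
  simpa only [transpose_mul, transpose_transpose] using h.eq

variable [DecidableEq m]

theorem fromBlocks_transpose_mul_J_mul_fromBlocks (P : Matrix m n α) (Q : Matrix m n' α)
    (R : Matrix m n α) (S : Matrix m n' α) :
    (fromBlocks P Q R S)ᵀ * (fromBlocks 0 1 (-1) 0 : Matrix (m ⊕ m) (m ⊕ m) α) *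
        fromBlocks P Q R S =
      fromBlocks (Pᵀ * R - Rᵀ * P) (Pᵀ * S - Rᵀ * Q) (Qᵀ * R - Sᵀ * P) (Qᵀ * S - Sᵀ * Q) := by
  simp only [fromBlocks_transpose, fromBlocks_multiply, Matrix.mul_zero, Matrix.mul_one,
    Matrix.mul_neg, Matrix.neg_mul, zero_add, add_zero, neg_add_eq_sub]

theorem fromBlocks_transpose_mul_J_mul_fromBlocks_eq_J {P Q R S : Matrix m m α}
    (hPR : (Pᵀ * R).IsSymm) (hQS : (Qᵀ * S).IsSymm) (hPSRQ : Pᵀ * S - Rᵀ * Q = 1) :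
    (fromBlocks P Q R S)ᵀ * (fromBlocks 0 1 (-1) 0 : Matrix (m ⊕ m) (m ⊕ m) α) *
        fromBlocks P Q R S =
      fromBlocks 0 1 (-1) 0 := by
  have hQRSP : Qᵀ * R - Sᵀ * P = -1 := by
    rw [← neg_sub, ← transpose_one, ← hPSRQ]
    simp only [transpose_sub, transpose_mul, transpose_transpose]
  rw [fromBlocks_transpose_mul_J_mul_fromBlocks, hPSRQ, hQRSP, transpose_mul_eq_of_isSymm hPR,
    transpose_mul_eq_of_isSymm hQS, sub_self, sub_self]

end Matrix

/-- Any matrix of the covariant form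
`[[A11, I-A11, A13, A13],[A21, -A21, I-A11ᵀ, -A11ᵀ],[0,0,I,I],[-I,I,0,0]]`,
with `A13, A21` symmetric, is symplectic. -/
theorem covariant_form_symplectic (d : ℕ) (A11 A13 A21 : Matrix (Fin d) (Fin d) ℝ)
    (h13 : A13ᵀ = A13) (h21 : A21ᵀ = A21) :
    (Matrix.fromBlocks
      (Matrix.fromBlocks A11 (1 - A11) A21 (-A21))
      (Matrix.fromBlocks A13 A13 (1 - A11ᵀ) (-A11ᵀ))
      (Matrix.fromBlocks 0 0 (-1) 1)
      (Matrix.fromBlocks 1 1 0 0))ᵀ * stdJ2 d *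
    Matrix.fromBlocks
      (Matrix.fromBlocks A11 (1 - A11) A21 (-A21))
      (Matrix.fromBlocks A13 A13 (1 - A11ᵀ) (-A11ᵀ))
      (Matrix.fromBlocks 0 0 (-1) 1)
      (Matrix.fromBlocks 1 1 0 0) = stdJ2 d := by
  refine Matrix.fromBlocks_transpose_mul_J_mul_fromBlocks_eq_J ?_ ?_ ?_
  · simpa [fromBlocks_transpose, fromBlocks_multiply, h21] using
      IsSymm.fromBlocks (IsSymm.neg h21) h21 (IsSymm.neg h21)
  · simpa [fromBlocks_transpose, fromBlocks_multiply, h13] using IsSymm.fromBlocks h13 h13 h13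
  · simp [fromBlocks_transpose, fromBlocks_multiply, sub_eq_add_neg, fromBlocks_neg,
      fromBlocks_add, ← fromBlocks_one]
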